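/- arXiv:1409.1167 — 3 statements merged into one kernel-verified Lean document; each statement's English description precedes it below -/
import Mathlib

section
/- Let H be a real Hilbert space and V ⊆ H a (closed) subspace. Let F : H → ℝ be Fréchet differentiable with derivative F'(x) ∈ H* at each x ∈ H. Assume: (i) there is a constant α > 0 such that (F'(x) − F'(y))(x − y) ≥ α·‖x − y‖² for all x, y ∈ H (strong convexity coming from the Tikhonov regularization term with regularization parameter α); (ii) there is a constant D > 0 such that ‖F'(x) − F'(y)‖ ≤ D·‖x − y‖ for all x, y ∈ H; (iii) ε_r ∈ H satisfies F'(ε_r) = 0 (ε_r is the regularized solution); (iv) ε_h ∈ V satisfies the Galerkin orthogonality F'(ε_h)(v) = 0 for all v ∈ V; (v) ε_I ∈ V (an interpolant of ε_r in V). Then ‖ε_h − ε_r‖ ≤ (D/α)·‖ε_r − ε_I‖. (This is the abstract content of the paper's a posteriori error estimate theorem for the regularized solution: combined with the finite element interpolation estimate ‖ε_r − ε_I‖ ≤ C_I‖h ε_h‖ it yields ‖ε_h − ε_r‖_{L²(Ω)} ≤ (D/α) C_I ‖h ε_h‖_{L²(Ω)}.) -/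
/-!
Strong monotonicity, Galerkin orthogonality and the Lipschitz bound give, with `e = ε_h - ε_r`,
`α ‖e‖² ≤ (F' ε_h - F' ε_r) e = (F' ε_h - F' ε_r) (ε_I - ε_r) ≤ D ‖e‖ ‖ε_r - ε_I‖`,
and cancelling one factor `‖e‖` is Céa's lemma for the nonlinear map `F'`.
-/

theorem mul_norm_sub_le_of_stronglyMonotone_of_lipschitz
    {E : Type*} [SeminormedAddCommGroup E] [NormedSpace ℝ E] {A : E → E →L[ℝ] ℝ} {α D : ℝ}
    (hmono : ∀ x y, α * ‖x - y‖ ^ 2 ≤ (A x - A y) (x - y))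
    (hLip : ∀ x y, ‖A x - A y‖ ≤ D * ‖x - y‖) {u w v : E}
    (horth : (A u - A w) (u - v) = 0) :
    α * ‖u - w‖ ≤ D * ‖w - v‖ := by
  have hsq : α * ‖u - w‖ ^ 2 ≤ D * ‖w - v‖ * ‖u - w‖ :=
    calc α * ‖u - w‖ ^ 2 ≤ (A u - A w) (u - w) := hmono u w
      _ = (A u - A w) (v - w) := by
        rw [← sub_add_sub_cancel u v w, map_add, horth, zero_add]
      _ ≤ ‖A u - A w‖ * ‖v - w‖ := (le_abs_self _).trans ((A u - A w).le_opNorm _)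
      _ ≤ D * ‖u - w‖ * ‖w - v‖ := by
        rw [norm_sub_rev v w]; gcongr; exact hLip u w
      _ = D * ‖w - v‖ * ‖u - w‖ := by ring
  rcases (norm_nonneg (u - w)).eq_or_lt with h | h
  · rw [← h, mul_zero]
    exact (norm_nonneg _).trans (hLip w v)
  · nlinarith

theorem regularized_solution_aposteriori_estimate_general
    {H : Type*} [NormedAddCommGroup H] [InnerProductSpace ℝ H]
    (V : Submodule ℝ H)
    (F' : H → (H →L[ℝ] ℝ))
    (α : ℝ) (hα : 0 < α)
    (hmono : ∀ x y : H, (F' x - F' y) (x - y) ≥ α * ‖x - y‖ ^ 2)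
    (D : ℝ)
    (hLip : ∀ x y : H, ‖F' x - F' y‖ ≤ D * ‖x - y‖)
    (ε_r ε_h ε_I : H)
    (hcrit : F' ε_r = 0)
    (hεh : ε_h ∈ V)
    (hGal : ∀ v ∈ V, F' ε_h v = 0)
    (hεI : ε_I ∈ V) :
    ‖ε_h - ε_r‖ ≤ (D / α) * ‖ε_r - ε_I‖ := by
  have horth : (F' ε_h - F' ε_r) (ε_h - ε_I) = 0 := by
    rw [hcrit, sub_zero, hGal _ (V.sub_mem hεh hεI)]
  have hcea := mul_norm_sub_le_of_stronglyMonotone_of_lipschitz hmono hLip horth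
  rw [div_mul_eq_mul_div, le_div_iff₀ hα]
  linarith

/-- A posteriori error estimate for the regularized solution of the Tikhonov
functional: if `F'` is strongly monotone with constant `α` and Lipschitz with
constant `D`, `ε_r` is a critical point of `F`, and `ε_h ∈ V` satisfies the
Galerkin orthogonality, then `‖ε_h − ε_r‖ ≤ (D/α)·‖ε_r − ε_I‖` for any
interpolant `ε_I ∈ V` of `ε_r`. -/
theorem regularized_solution_aposteriori_estimate
    {H : Type*} [NormedAddCommGroup H] [InnerProductSpace ℝ H] [CompleteSpace H]
    (V : Submodule ℝ H) (hVclosed : IsClosed (V : Set H))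
    (F : H → ℝ) (F' : H → (H →L[ℝ] ℝ))
    (hF : ∀ x : H, HasFDerivAt F (F' x) x)
    (α : ℝ) (hα : 0 < α)
    (hmono : ∀ x y : H, (F' x - F' y) (x - y) ≥ α * ‖x - y‖ ^ 2)
    (D : ℝ) (hD : 0 < D)
    (hLip : ∀ x y : H, ‖F' x - F' y‖ ≤ D * ‖x - y‖)
    (ε_r ε_h ε_I : H)
    (hcrit : F' ε_r = 0)
    (hεh : ε_h ∈ V)
    (hGal : ∀ v ∈ V, F' ε_h v = 0)
    (hεI : ε_I ∈ V) :
    ‖ε_h - ε_r‖ ≤ (D / α) * ‖ε_r - ε_I‖ :=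
  regularized_solution_aposteriori_estimate_general V F' α hα hmono D hLip ε_r ε_h ε_I hcrit hεh
    hGal hεI
end

section
/- Let U ⊆ ℝ³ (Euclidean space) be an open set, let s̲ < s̄ be positive reals, let V : U → ℝ be twice continuously differentiable, let ε : U → ℝ, and let q : U × [s̲, s̄] → ℝ be such that q and its first and second spatial partial derivatives exist, are jointly continuous on U × [s̲, s̄], and are continuously differentiable in s. Define v(x, s) := −∫ₛ^{s̄} q(x, τ) dτ + V(x). Suppose that for every x ∈ U and every s ∈ (s̲, s̄], Δₓv(x, s) + s²·‖∇ₓv(x, s)‖² = ε(x), where ε does not depend on s. Then for every x ∈ U and s ∈ (s̲, s̄), q satisfies the nonlinear integro-differential equation: Δₓq(x, s) − 2s²·∇ₓq(x, s)·∫ₛ^{s̄} ∇ₓq(x, τ) dτ + 2s²·∇V(x)·∇ₓq(x, s) + 2s·‖∫ₛ^{s̄} ∇ₓq(x, τ) dτ‖² − 4s·∇V(x)·∫ₛ^{s̄} ∇ₓq(x, τ) dτ + 2s·‖∇V(x)‖² = 0. -/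
/-!
Fix `x`. Differentiating under the integral sign (the second spatial derivatives of `q` are
bounded on a compact neighbourhood, which dominates the difference quotients) gives
`∇ₓv = -∫ₛ^{s̄} ∇ₓq + ∇V` and `Δₓv = -∫ₛ^{s̄} Δₓq + ΔV`. Hence `Δₓv + s²‖∇ₓv‖²` is a function of
`s` alone whose derivative, by the fundamental theorem of calculus, is
`Δₓq + 2s‖∇ₓv‖² + 2s²⟪∇ₓq, ∇ₓv⟫`; it vanishes because the sum equals `ε(x)` for every `s`, and
expanding `∇ₓv` gives the equation.
-/

open RealInnerProductSpace

/-- The spatial Laplacian of a function on `ℝ³`: the sum of its second partial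
derivatives. -/
noncomputable def spatialLaplacian (f : EuclideanSpace ℝ (Fin 3) → ℝ)
    (x : EuclideanSpace ℝ (Fin 3)) : ℝ :=
  ∑ i : Fin 3,
    fderiv ℝ (fun y => fderiv ℝ f y (EuclideanSpace.single i 1)) x
      (EuclideanSpace.single i 1)

open Set
open scoped Interval

local notation "ℝ³" => EuclideanSpace ℝ (Fin 3)

theorem hasFDerivAt_intervalIntegral_of_continuousOn {H B : Type*} [NormedAddCommGroup H]
    [NormedSpace ℝ H] [ProperSpace H] [NormedAddCommGroup B] [NormedSpace ℝ B]
    {U : Set H} (hU : IsOpen U) {K : Set ℝ} {s t : ℝ} (hst : [[s, t]] ⊆ K)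
    {f : H → ℝ → B} {f' : H → ℝ → H →L[ℝ] B}
    (hf : ContinuousOn (fun p : H × ℝ => f p.1 p.2) (U ×ˢ K))
    (hf' : ContinuousOn (fun p : H × ℝ => f' p.1 p.2) (U ×ˢ K))
    (hderiv : ∀ τ ∈ K, ∀ y ∈ U, HasFDerivAt (f · τ) (f' y τ) y) {x : H} (hx : x ∈ U) :
    HasFDerivAt (fun y => ∫ τ in s..t, f y τ) (∫ τ in s..t, f' x τ) x := by
  obtain ⟨r, hr, hball⟩ := Metric.nhds_basis_closedBall.mem_iff.mp (hU.mem_nhds hx)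
  have hst' : Ι s t ⊆ K := uIoc_subset_uIcc.trans hst
  -- `f'` is bounded on the compact set `closedBall x r ×ˢ [[s, t]]`, which dominates the family.
  obtain ⟨M, hM⟩ := ((isCompact_closedBall x r).prod isCompact_uIcc).exists_bound_of_continuousOn
    (hf'.mono (prod_mono hball hst))
  refine intervalIntegral.hasFDerivAt_integral_of_dominated_of_fderiv_le (bound := fun _ => M)
    (Metric.closedBall_mem_nhds x hr) ?_ (((hf.uncurry_left x hx).mono hst).intervalIntegrable)
    (((hf'.uncurry_left x hx).mono hst').aestronglyMeasurable measurableSet_uIoc)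
    (.of_forall fun τ hτ y hy => hM (y, τ) ⟨hy, uIoc_subset_uIcc hτ⟩) intervalIntegrable_const
    (.of_forall fun τ hτ y hy => hderiv τ (hst' hτ) y (hball hy))
  filter_upwards [hU.mem_nhds hx] with y hy
  exact ((hf.uncurry_left y hy).mono hst').aestronglyMeasurable measurableSet_uIoc

theorem ContDiffAt.hasFDerivAt_fderiv {H F : Type*} [NormedAddCommGroup H] [NormedSpace ℝ H]
    [NormedAddCommGroup F] [NormedSpace ℝ F] {f : H → F} {x : H} (hf : ContDiffAt ℝ 2 f x) :
    HasFDerivAt (fderiv ℝ f) (fderiv ℝ (fderiv ℝ f) x) x :=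
  ((hf.fderiv_right (m := 1) le_rfl).differentiableAt one_ne_zero).hasFDerivAt

theorem hasDerivAt_intervalIntegral_left_of_continuousOn {E : Type*} [NormedAddCommGroup E]
    [NormedSpace ℝ E] [CompleteSpace E] {f : ℝ → E} {a b s : ℝ} (hf : ContinuousOn f (Icc a b))
    (hs : s ∈ Ioo a b) : HasDerivAt (fun u => ∫ τ in u..b, f τ) (-f s) s :=
  intervalIntegral.integral_hasDerivAt_left
    ((hf.mono (Icc_subset_Icc_left hs.1.le)).intervalIntegrable_of_Icc hs.2.le)
    ((hf.mono Ioo_subset_Icc_self).stronglyMeasurableAtFilter isOpen_Ioo s hs)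
    (hf.continuousAt (Icc_mem_nhds hs.1 hs.2))

theorem eq_zero_of_forall_neg_intervalIntegral_add_sq_mul_norm_sq_eq {E : Type*}
    [NormedAddCommGroup E] [InnerProductSpace ℝ E] [CompleteSpace E]
    {L : ℝ → ℝ} {G : ℝ → E} {a b c e : ℝ} {g : E}
    (hL : ContinuousOn L (Icc a b)) (hG : ContinuousOn G (Icc a b))
    (h : ∀ u ∈ Ioo a b, -(∫ τ in u..b, L τ) + c + u ^ 2 * ‖-(∫ τ in u..b, G τ) + g‖ ^ 2 = e)
    {s : ℝ} (hs : s ∈ Ioo a b) :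
    L s + 2 * s * ‖-(∫ τ in s..b, G τ) + g‖ ^ 2
      + 2 * s ^ 2 * ⟪G s, -(∫ τ in s..b, G τ) + g⟫ = 0 := by
  have hw : HasDerivAt (fun u => -(∫ τ in u..b, G τ) + g) (G s) s := by
    simpa using ((hasDerivAt_intervalIntegral_left_of_continuousOn hG hs).neg).add_const g
  have hΦ := ((((hasDerivAt_intervalIntegral_left_of_continuousOn hL hs).neg).add_const c).add
    ((hasDerivAt_pow 2 s).mul hw.norm_sq))
  have hconst : HasDerivAt (fun u => -(∫ τ in u..b, L τ) + c
      + u ^ 2 * ‖-(∫ τ in u..b, G τ) + g‖ ^ 2) 0 s :=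
    (hasDerivAt_const s e).congr_of_eventuallyEq
      (Filter.eventually_of_mem (isOpen_Ioo.mem_nhds hs) h)
  have := hΦ.unique hconst
  rw [real_inner_comm] at this
  linear_combination this

-- Instance search fails for `ENormedAddMonoid` on iterated spaces of continuous linear maps,
-- so interval integrability of a Hessian cannot be stated directly; an abstract `B` avoids this.
theorem ContinuousLinearMap.intervalIntegral_comp_comm_of_continuousOn {B C : Type*}
    [NormedAddCommGroup B] [NormedSpace ℝ B] [CompleteSpace B] [NormedAddCommGroup C]
    [NormedSpace ℝ C] [CompleteSpace C] (L : B →L[ℝ] C) {f : ℝ → B} {s t : ℝ}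
    (hf : ContinuousOn f [[s, t]]) :
    ∫ τ in s..t, L (f τ) = L (∫ τ in s..t, f τ) :=
  L.intervalIntegral_comp_comm hf.intervalIntegrable

noncomputable def hessianTrace : (ℝ³ →L[ℝ] ℝ³ →L[ℝ] ℝ) →L[ℝ] ℝ :=
  ∑ i : Fin 3, (ContinuousLinearMap.apply ℝ ℝ (EuclideanSpace.single i 1)).comp
    (ContinuousLinearMap.apply ℝ (ℝ³ →L[ℝ] ℝ) (EuclideanSpace.single i 1))

theorem spatialLaplacian_eq_hessianTrace {f : ℝ³ → ℝ} {x : ℝ³} {Φ : ℝ³ →L[ℝ] ℝ³ →L[ℝ] ℝ}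
    (h : HasFDerivAt (fderiv ℝ f) Φ x) : spatialLaplacian f x = hessianTrace Φ := by
  simp only [spatialLaplacian, hessianTrace, sum_apply,
    ContinuousLinearMap.coe_comp, Function.comp_apply, ContinuousLinearMap.apply_apply]
  refine Finset.sum_congr rfl fun i _ => ?_
  exact DFunLike.congr_fun
    ((ContinuousLinearMap.apply ℝ ℝ (EuclideanSpace.single i 1)).hasFDerivAt.comp x h).fderiv _

theorem hasFDerivAt_neg_intervalIntegral_add {H : Type*} [NormedAddCommGroup H]
    [NormedSpace ℝ H] [ProperSpace H] {U : Set H} (hU : IsOpen U) {K : Set ℝ} {s t : ℝ}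
    (hst : [[s, t]] ⊆ K) {q : H → ℝ → ℝ} (hq : ∀ τ ∈ K, DifferentiableOn ℝ (q · τ) U)
    (hq_cont : ContinuousOn (fun p : H × ℝ => q p.1 p.2) (U ×ˢ K))
    (hq_cont1 : ContinuousOn (fun p : H × ℝ => fderiv ℝ (q · p.2) p.1) (U ×ˢ K))
    {V : H → ℝ} {x : H} (hV : DifferentiableAt ℝ V x) (hx : x ∈ U) :
    HasFDerivAt (fun y => -(∫ τ in s..t, q y τ) + V y)
      (-(∫ τ in s..t, fderiv ℝ (q · τ) x) + fderiv ℝ V x) x :=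
  (hasFDerivAt_intervalIntegral_of_continuousOn hU hst hq_cont hq_cont1
    (fun τ hτ _ hy => ((hq τ hτ).differentiableAt (hU.mem_nhds hy)).hasFDerivAt) hx).neg.add
    hV.hasFDerivAt

theorem gradient_neg_intervalIntegral_add {H : Type*} [NormedAddCommGroup H]
    [InnerProductSpace ℝ H] [ProperSpace H] {U : Set H} (hU : IsOpen U) {K : Set ℝ} {s t : ℝ}
    (hst : [[s, t]] ⊆ K) {q : H → ℝ → ℝ} (hq : ∀ τ ∈ K, DifferentiableOn ℝ (q · τ) U)
    (hq_cont : ContinuousOn (fun p : H × ℝ => q p.1 p.2) (U ×ˢ K))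
    (hq_cont1 : ContinuousOn (fun p : H × ℝ => fderiv ℝ (q · p.2) p.1) (U ×ˢ K))
    {V : H → ℝ} {x : H} (hV : DifferentiableAt ℝ V x) (hx : x ∈ U) :
    gradient (fun y => -(∫ τ in s..t, q y τ) + V y) x
      = -(∫ τ in s..t, gradient (q · τ) x) + gradient V x := by
  rw [(hasFDerivAt_iff_hasGradientAt.mp
    (hasFDerivAt_neg_intervalIntegral_add hU hst hq hq_cont hq_cont1 hV hx)).gradient,
    map_add, map_neg]
  congr 2
  exact ((InnerProductSpace.toDual ℝ H).symm.toLinearIsometry.intervalIntegral_comp_comm _).symm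

theorem hasFDerivAt_fderiv_neg_intervalIntegral_add {H : Type*} [NormedAddCommGroup H]
    [NormedSpace ℝ H] [ProperSpace H] {U : Set H} (hU : IsOpen U) {K : Set ℝ} {s t : ℝ}
    (hst : [[s, t]] ⊆ K) {q : H → ℝ → ℝ} (hq : ∀ τ ∈ K, ContDiffOn ℝ 2 (q · τ) U)
    (hq_cont : ContinuousOn (fun p : H × ℝ => q p.1 p.2) (U ×ˢ K))
    (hq_cont1 : ContinuousOn (fun p : H × ℝ => fderiv ℝ (q · p.2) p.1) (U ×ˢ K))
    (hq_cont2 : ContinuousOn (fun p : H × ℝ => fderiv ℝ (fderiv ℝ (q · p.2)) p.1) (U ×ˢ K))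
    {V : H → ℝ} (hV : ContDiffOn ℝ 2 V U) {x : H} (hx : x ∈ U) :
    HasFDerivAt (fderiv ℝ (fun y => -(∫ τ in s..t, q y τ) + V y))
      (-(∫ τ in s..t, fderiv ℝ (fderiv ℝ (q · τ)) x) + fderiv ℝ (fderiv ℝ V) x) x := by
  have hq2 : ∀ τ ∈ K, ∀ y ∈ U,
      HasFDerivAt (fderiv ℝ (q · τ)) (fderiv ℝ (fderiv ℝ (q · τ)) y) y := fun τ hτ y hy =>
    ((hq τ hτ).contDiffAt (hU.mem_nhds hy)).hasFDerivAt_fderiv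
  refine ((hasFDerivAt_intervalIntegral_of_continuousOn hU hst hq_cont1 hq_cont2 hq2 hx).neg.add
    (hV.contDiffAt (hU.mem_nhds hx)).hasFDerivAt_fderiv).congr_of_eventuallyEq ?_
  filter_upwards [hU.mem_nhds hx] with y hy
  exact (hasFDerivAt_neg_intervalIntegral_add hU hst
    (fun τ hτ => (hq τ hτ).differentiableOn two_ne_zero) hq_cont hq_cont1
    ((hV.differentiableOn two_ne_zero).differentiableAt (hU.mem_nhds hy)) hy).fderiv

theorem spatialLaplacian_neg_intervalIntegral_add {U : Set ℝ³} (hU : IsOpen U) {K : Set ℝ}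
    {s t : ℝ} (hst : [[s, t]] ⊆ K) {q : ℝ³ → ℝ → ℝ} (hq : ∀ τ ∈ K, ContDiffOn ℝ 2 (q · τ) U)
    (hq_cont : ContinuousOn (fun p : ℝ³ × ℝ => q p.1 p.2) (U ×ˢ K))
    (hq_cont1 : ContinuousOn (fun p : ℝ³ × ℝ => fderiv ℝ (q · p.2) p.1) (U ×ˢ K))
    (hq_cont2 : ContinuousOn (fun p : ℝ³ × ℝ => fderiv ℝ (fderiv ℝ (q · p.2)) p.1) (U ×ˢ K))
    {V : ℝ³ → ℝ} (hV : ContDiffOn ℝ 2 V U) {x : ℝ³} (hx : x ∈ U) :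
    spatialLaplacian (fun y => -(∫ τ in s..t, q y τ) + V y) x
      = -(∫ τ in s..t, spatialLaplacian (q · τ) x) + spatialLaplacian V x := by
  rw [spatialLaplacian_eq_hessianTrace (hasFDerivAt_fderiv_neg_intervalIntegral_add hU hst hq
      hq_cont hq_cont1 hq_cont2 hV hx),
    spatialLaplacian_eq_hessianTrace (hV.contDiffAt (hU.mem_nhds hx)).hasFDerivAt_fderiv,
    map_add, map_neg hessianTrace, intervalIntegral.integral_congr fun τ hτ =>
      spatialLaplacian_eq_hessianTrace
        ((hq τ (hst hτ)).contDiffAt (hU.mem_nhds hx)).hasFDerivAt_fderiv,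
    hessianTrace.intervalIntegral_comp_comm_of_continuousOn (B := ℝ³ →L[ℝ] ℝ³ →L[ℝ] ℝ)
      ((hq_cont2.uncurry_left (f := fun y τ => fderiv ℝ (fderiv ℝ (q · τ)) y) x hx).mono hst)]

theorem continuousOn_spatialLaplacian {U : Set ℝ³} (hU : IsOpen U) {K : Set ℝ}
    {q : ℝ³ → ℝ → ℝ} (hq : ∀ τ ∈ K, ContDiffOn ℝ 2 (q · τ) U)
    (hq_cont2 : ContinuousOn (fun p : ℝ³ × ℝ => fderiv ℝ (fderiv ℝ (q · p.2)) p.1) (U ×ˢ K))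
    {x : ℝ³} (hx : x ∈ U) : ContinuousOn (fun τ => spatialLaplacian (q · τ) x) K :=
  ContinuousOn.congr (f := fun τ => hessianTrace (fderiv ℝ (fderiv ℝ (q · τ)) x))
    (hessianTrace.continuous.comp_continuousOn
      (hq_cont2.uncurry_left (f := fun y τ => fderiv ℝ (fderiv ℝ (q · τ)) y) x hx)) fun τ hτ =>
    spatialLaplacian_eq_hessianTrace ((hq τ hτ).contDiffAt (hU.mem_nhds hx)).hasFDerivAt_fderiv

theorem integro_differential_equation_for_q_general
    (U : Set (EuclideanSpace ℝ (Fin 3))) (hU : IsOpen U)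
    (sl sb : ℝ)
    (V : EuclideanSpace ℝ (Fin 3) → ℝ) (hV : ContDiffOn ℝ 2 V U)
    (ε : EuclideanSpace ℝ (Fin 3) → ℝ)
    (q : EuclideanSpace ℝ (Fin 3) → ℝ → ℝ)
    -- q is twice continuously differentiable in the spatial variable
    (hq_space : ∀ s ∈ Set.Icc sl sb, ContDiffOn ℝ 2 (fun x => q x s) U)
    -- q and its first and second spatial derivatives are jointly continuous
    (hq_cont : ContinuousOn (fun p : EuclideanSpace ℝ (Fin 3) × ℝ => q p.1 p.2)
      (U ×ˢ Set.Icc sl sb))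
    (hq_cont1 : ContinuousOn
      (fun p : EuclideanSpace ℝ (Fin 3) × ℝ => fderiv ℝ (fun y => q y p.2) p.1)
      (U ×ˢ Set.Icc sl sb))
    (hq_cont2 : ContinuousOn
      (fun p : EuclideanSpace ℝ (Fin 3) × ℝ =>
        fderiv ℝ (fun y => fderiv ℝ (fun z => q z p.2) y) p.1)
      (U ×ˢ Set.Icc sl sb))
    (v : EuclideanSpace ℝ (Fin 3) → ℝ → ℝ)
    (hv : ∀ x s, v x s = -(∫ τ in s..sb, q x τ) + V x)
    (heq : ∀ x ∈ U, ∀ s ∈ Set.Ioc sl sb,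
      spatialLaplacian (fun y => v y s) x
        + s ^ 2 * ‖gradient (fun y => v y s) x‖ ^ 2 = ε x) :
    ∀ x ∈ U, ∀ s ∈ Set.Ioo sl sb,
      spatialLaplacian (fun y => q y s) x
        - 2 * s ^ 2 * ⟪gradient (fun y => q y s) x,
            ∫ τ in s..sb, gradient (fun y => q y τ) x⟫
        + 2 * s ^ 2 * ⟪gradient V x, gradient (fun y => q y s) x⟫
        + 2 * s * ‖∫ τ in s..sb, gradient (fun y => q y τ) x‖ ^ 2
        - 4 * s * ⟪gradient V x, ∫ τ in s..sb, gradient (fun y => q y τ) x⟫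
        + 2 * s * ‖gradient V x‖ ^ 2 = 0 := by
  intro x hx s hs
  have hdiff : ∀ τ ∈ Icc sl sb, DifferentiableOn ℝ (q · τ) U := fun τ hτ =>
    (hq_space τ hτ).differentiableOn two_ne_zero
  have hVx : DifferentiableAt ℝ V x :=
    (hV.differentiableOn two_ne_zero).differentiableAt (hU.mem_nhds hx)
  have hconst : ∀ u ∈ Ioo sl sb, -(∫ τ in u..sb, spatialLaplacian (q · τ) x)
      + spatialLaplacian V x
      + u ^ 2 * ‖-(∫ τ in u..sb, gradient (q · τ) x) + gradient V x‖ ^ 2 = ε x := by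
    intro u hu
    have hsub : [[u, sb]] ⊆ Icc sl sb :=
      uIcc_subset_Icc ⟨hu.1.le, hu.2.le⟩ ⟨hu.1.le.trans hu.2.le, le_rfl⟩
    rw [← spatialLaplacian_neg_intervalIntegral_add hU hsub hq_space hq_cont hq_cont1 hq_cont2
        hV hx,
      ← gradient_neg_intervalIntegral_add hU hsub hdiff hq_cont hq_cont1 hVx hx]
    simpa only [hv] using heq x hx u ⟨hu.1, hu.2.le⟩
  have hG : ContinuousOn (fun τ => gradient (q · τ) x) (Icc sl sb) :=
    (InnerProductSpace.toDual ℝ ℝ³).symm.continuous.comp_continuousOn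
      (hq_cont1.uncurry_left (f := fun y τ => fderiv ℝ (q · τ) y) x hx)
  have key := eq_zero_of_forall_neg_intervalIntegral_add_sq_mul_norm_sq_eq
    (continuousOn_spatialLaplacian hU hq_space hq_cont2 hx) hG hconst hs
  rw [norm_add_sq_real, norm_neg, inner_add_right, inner_neg_right, inner_neg_left] at key
  linear_combination key + 2 * s ^ 2 * real_inner_comm (gradient (q · s) x) (gradient V x)
    - 4 * s * real_inner_comm (∫ τ in s..sb, gradient (q · τ) x) (gradient V x)

/-- The paper's integro-differential equation (eq:q) for `q` and the tail function `V`: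
if `v(x,s) := −∫ₛ^{s̄} q(x,τ) dτ + V(x)` satisfies `Δₓv + s²‖∇ₓv‖² = ε(x)` with `ε`
independent of `s`, then
`Δₓq − 2s²∇ₓq·∫ₛ^{s̄}∇ₓq dτ + 2s²∇V·∇ₓq + 2s‖∫ₛ^{s̄}∇ₓq dτ‖² − 4s∇V·∫ₛ^{s̄}∇ₓq dτ + 2s‖∇V‖² = 0`. -/
theorem integro_differential_equation_for_q
    (U : Set (EuclideanSpace ℝ (Fin 3))) (hU : IsOpen U)
    (sl sb : ℝ) (hsl : 0 < sl) (hslsb : sl < sb)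
    (V : EuclideanSpace ℝ (Fin 3) → ℝ) (hV : ContDiffOn ℝ 2 V U)
    (ε : EuclideanSpace ℝ (Fin 3) → ℝ)
    (q : EuclideanSpace ℝ (Fin 3) → ℝ → ℝ)
    -- q is twice continuously differentiable in the spatial variable
    (hq_space : ∀ s ∈ Set.Icc sl sb, ContDiffOn ℝ 2 (fun x => q x s) U)
    -- q and its first and second spatial derivatives are jointly continuous
    (hq_cont : ContinuousOn (fun p : EuclideanSpace ℝ (Fin 3) × ℝ => q p.1 p.2)
      (U ×ˢ Set.Icc sl sb))
    (hq_cont1 : ContinuousOn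
      (fun p : EuclideanSpace ℝ (Fin 3) × ℝ => fderiv ℝ (fun y => q y p.2) p.1)
      (U ×ˢ Set.Icc sl sb))
    (hq_cont2 : ContinuousOn
      (fun p : EuclideanSpace ℝ (Fin 3) × ℝ =>
        fderiv ℝ (fun y => fderiv ℝ (fun z => q z p.2) y) p.1)
      (U ×ˢ Set.Icc sl sb))
    -- q and its first and second spatial derivatives are C¹ in the pseudo frequency s
    (hq_s0 : ∀ x ∈ U, ContDiffOn ℝ 1 (fun t => q x t) (Set.Icc sl sb))
    (hq_s1 : ∀ x ∈ U,
      ContDiffOn ℝ 1 (fun t => fderiv ℝ (fun y => q y t) x) (Set.Icc sl sb))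
    (hq_s2 : ∀ x ∈ U,
      ContDiffOn ℝ 1
        (fun t => fderiv ℝ (fun y => fderiv ℝ (fun z => q z t) y) x) (Set.Icc sl sb))
    (v : EuclideanSpace ℝ (Fin 3) → ℝ → ℝ)
    (hv : ∀ x s, v x s = -(∫ τ in s..sb, q x τ) + V x)
    (heq : ∀ x ∈ U, ∀ s ∈ Set.Ioc sl sb,
      spatialLaplacian (fun y => v y s) x
        + s ^ 2 * ‖gradient (fun y => v y s) x‖ ^ 2 = ε x) :
    ∀ x ∈ U, ∀ s ∈ Set.Ioo sl sb,
      spatialLaplacian (fun y => q y s) x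
        - 2 * s ^ 2 * ⟪gradient (fun y => q y s) x,
            ∫ τ in s..sb, gradient (fun y => q y τ) x⟫
        + 2 * s ^ 2 * ⟪gradient V x, gradient (fun y => q y s) x⟫
        + 2 * s * ‖∫ τ in s..sb, gradient (fun y => q y τ) x‖ ^ 2
        - 4 * s * ⟪gradient V x, ∫ τ in s..sb, gradient (fun y => q y τ) x⟫
        + 2 * s * ‖gradient V x‖ ^ 2 = 0 :=
  integro_differential_equation_for_q_general U hU sl sb V hV ε q hq_space hq_cont hq_cont1 hq_cont2
    v hv heq
end

section
/- Let H be a real normed vector space, V ⊆ H a subspace, and F : H → ℝ twice Fréchet differentiable. Let ε ∈ H and ε_h ∈ V, and suppose: (i) the Galerkin orthogonality F'(ε_h)(v) = 0 holds for all v ∈ V; (ii) ε_I ∈ V (an interpolant of ε); (iii) there is M ≥ 0 such that ‖F''(x)‖ ≤ M for all x on the segment joining ε_h and ε. Then the error in the functional satisfies |F(ε) − F(ε_h) − F'(ε_h)(ε − ε_I)| ≤ (M/2)·‖ε − ε_h‖². In particular, up to the second order remainder R(ε, ε_h) with |R(ε, ε_h)| ≤ (M/2)‖ε − ε_h‖²,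 one has the error representation F(ε) − F(ε_h) ≈ F'(ε_h)(ε − ε_I). -/
/-!
Galerkin orthogonality kills `F'(ε_h)(ε_h - ε_I)`, since `ε_h - ε_I ∈ V`, so the claim is the
second order Taylor bound `|F(ε) - F(ε_h) - F'(ε_h)(ε - ε_h)| ≤ M/2 ‖ε - ε_h‖²`. Along the
segment `t ↦ ε_h + t (ε - ε_h)` the derivative of `F` moves by at most `M t ‖ε - ε_h‖²`
(mean value inequality for `F'`), and integrating this linear bound gives the factor `1/2`.
-/

open Set

section

variable {E G : Type*} [NormedAddCommGroup E] [NormedSpace ℝ E]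
  [NormedAddCommGroup G] [NormedSpace ℝ G]

theorem norm_sub_sub_smul_deriv_le_of_norm_deriv_sub_le {f f' : ℝ → G} {a b K : ℝ}
    (hab : a ≤ b) (hf : ∀ t ∈ Icc a b, HasDerivAt f (f' t) t)
    (hK : ∀ t ∈ Ico a b, ‖f' t - f' a‖ ≤ K * (t - a)) :
    ‖f b - f a - (b - a) • f' a‖ ≤ K / 2 * (b - a) ^ 2 := by
  have hφ : ∀ t ∈ Icc a b,
      HasDerivAt (fun t => f t - f a - (t - a) • f' a) (f' t - f' a) t := fun t ht =>
    ((hf t ht).sub_const (f a)).sub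
      (((hasDerivAt_id t).sub_const a).smul_const (f' a)) |>.congr_deriv (by simp)
  have hB : ∀ t, HasDerivAt (fun t => K / 2 * (t - a) ^ 2) (K * (t - a)) t := fun t =>
    (((hasDerivAt_id t).sub_const a).pow 2).const_mul (K / 2) |>.congr_deriv (by simp; ring)
  refine image_norm_le_of_norm_deriv_right_le_deriv_boundary
    (fun t ht => (hφ t ht).continuousAt.continuousWithinAt)
    (fun t ht => (hφ t (Ico_subset_Icc_self ht)).hasDerivWithinAt) (by simp) hB hK
    (right_mem_Icc.2 hab)

theorem norm_image_sub_sub_fderiv_le_of_norm_fderiv_fderiv_le {f : E → G} {x y : E} {M : ℝ}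
    (hf : ∀ z ∈ segment ℝ x y, DifferentiableAt ℝ f z)
    (hf' : ∀ z ∈ segment ℝ x y, DifferentiableAt ℝ (fderiv ℝ f) z)
    (hM : ∀ z ∈ segment ℝ x y, ‖fderiv ℝ (fderiv ℝ f) z‖ ≤ M) :
    ‖f y - f x - fderiv ℝ f x (y - x)‖ ≤ M / 2 * ‖y - x‖ ^ 2 := by
  set v := y - x
  set γ : ℝ → E := fun t => x + t • v
  have hγ : ∀ t ∈ Icc (0 : ℝ) 1, γ t ∈ segment ℝ x y := fun t ht =>
    segment_eq_image' ℝ x y ▸ mem_image_of_mem _ ht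
  have hγ' : ∀ t, HasDerivAt γ v t := fun t =>
    ((hasDerivAt_id t).smul_const v).const_add x |>.congr_deriv (one_smul ℝ v)
  have hderiv : ∀ t ∈ Icc (0 : ℝ) 1, HasDerivAt (fun t => f (γ t)) (fderiv ℝ f (γ t) v) t :=
    fun t ht => (hf _ (hγ t ht)).hasFDerivAt.comp_hasDerivAt t (hγ' t)
  have hLip : ∀ z ∈ segment ℝ x y, ‖fderiv ℝ f z - fderiv ℝ f x‖ ≤ M * ‖z - x‖ := fun z hz =>
    (convex_segment x y).norm_image_sub_le_of_norm_fderiv_le hf' hM (left_mem_segment ℝ x y) hz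
  have hK : ∀ t ∈ Ico (0 : ℝ) 1,
      ‖fderiv ℝ f (γ t) v - fderiv ℝ f (γ 0) v‖ ≤ M * ‖v‖ ^ 2 * (t - 0) := fun t ht => by
    have hγt : ‖γ t - x‖ = t * ‖v‖ := by simp [γ, norm_smul, abs_of_nonneg ht.1]
    calc ‖fderiv ℝ f (γ t) v - fderiv ℝ f (γ 0) v‖
        = ‖(fderiv ℝ f (γ t) - fderiv ℝ f x) v‖ := by simp [γ]
      _ ≤ ‖fderiv ℝ f (γ t) - fderiv ℝ f x‖ * ‖v‖ := ContinuousLinearMap.le_opNorm _ _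
      _ ≤ M * ‖γ t - x‖ * ‖v‖ := by gcongr; exact hLip _ (hγ t (Ico_subset_Icc_self ht))
      _ = M * ‖v‖ ^ 2 * (t - 0) := by rw [hγt]; ring
  have := norm_sub_sub_smul_deriv_le_of_norm_deriv_sub_le zero_le_one hderiv hK
  rw [div_mul_eq_mul_div]
  simpa [γ, v] using this

end

theorem error_representation_tikhonov_functional_general
    {H : Type*} [NormedAddCommGroup H] [NormedSpace ℝ H]
    (V : Submodule ℝ H) (F : H → ℝ) (hF : ContDiff ℝ 2 F)
    (ε ε_h ε_I : H) (hεh : ε_h ∈ V) (hεI : ε_I ∈ V)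
    (hGal : ∀ v ∈ V, fderiv ℝ F ε_h v = 0)
    (M : ℝ)
    (hM : ∀ x ∈ segment ℝ ε_h ε, ‖fderiv ℝ (fderiv ℝ F) x‖ ≤ M) :
    |F ε - F ε_h - fderiv ℝ F ε_h (ε - ε_I)| ≤ (M / 2) * ‖ε - ε_h‖ ^ 2 := by
  have hinterp : fderiv ℝ F ε_h (ε - ε_I) = fderiv ℝ F ε_h (ε - ε_h) := by
    rw [← sub_add_sub_cancel ε ε_h ε_I, map_add, hGal _ (sub_mem hεh hεI), add_zero]
  have hF' : Differentiable ℝ (fderiv ℝ F) :=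
    (hF.fderiv_right (m := 1) (by norm_num)).differentiable (by norm_num)
  rw [hinterp, ← Real.norm_eq_abs]
  exact norm_image_sub_sub_fderiv_le_of_norm_fderiv_fderiv_le
    (fun z _ => hF.differentiable (by norm_num) z) (fun z _ => hF' z) hM

/-- A posteriori error representation for the Tikhonov functional: if `F` is twice
Fréchet differentiable, `ε_h ∈ V` satisfies the Galerkin orthogonality
`F'(ε_h)(v) = 0` for all `v ∈ V`, `ε_I ∈ V` is an interpolant of `ε`, and
`‖F''‖ ≤ M` on the segment joining `ε_h` and `ε`, then
`|F(ε) − F(ε_h) − F'(ε_h)(ε − ε_I)| ≤ (M/2)·‖ε − ε_h‖²`. -/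
theorem error_representation_tikhonov_functional
    {H : Type*} [NormedAddCommGroup H] [NormedSpace ℝ H]
    (V : Submodule ℝ H) (F : H → ℝ) (hF : ContDiff ℝ 2 F)
    (ε ε_h ε_I : H) (hεh : ε_h ∈ V) (hεI : ε_I ∈ V)
    (hGal : ∀ v ∈ V, fderiv ℝ F ε_h v = 0)
    (M : ℝ) (hM0 : 0 ≤ M)
    (hM : ∀ x ∈ segment ℝ ε_h ε, ‖fderiv ℝ (fderiv ℝ F) x‖ ≤ M) :
    |F ε - F ε_h - fderiv ℝ F ε_h (ε - ε_I)| ≤ (M / 2) * ‖ε - ε_h‖ ^ 2 :=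
  error_representation_tikhonov_functional_general V F hF ε ε_h ε_I hεh hεI hGal M hM
end
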